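/- arXiv:q-alg/9604004 — 2 statements merged into one kernel-verified Lean document; each statement's English description precedes it below -/
import Mathlib

section
/- Let ν ≥ 0 and ν₀,ν₁,ν₂,ν₃ > 0 be real, and set ρ_j = (n-j)ν + (ν₀+ν₁+ν₂+ν₃-1)/2. Define E_λ = ∑_{j=1}^n λ_j(λ_j + ν₀+ν₁+ν₂+ν₃ - 1 + 2(n-j)ν) for λ ∈ Λ. Then if μ < λ in dominance order, E_μ < E_λ. -/
def partSum (n : ℕ) (lam : Fin n → ℤ) (m : ℕ) : ℤ :=
  ∑ j ∈ Finset.univ.filter (fun j : Fin n => (j : ℕ) < m), lam j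

def InCone (n : ℕ) (lam : Fin n → ℤ) : Prop :=
  (∀ i j : Fin n, i ≤ j → lam j ≤ lam i) ∧ ∀ j, 0 ≤ lam j

def Dominates (n : ℕ) (mu lam : Fin n → ℤ) : Prop :=
  ∀ m, 1 ≤ m → m ≤ n → partSum n mu m ≤ partSum n lam m

/-- The Wilson type eigenvalue
`E_λ = ∑_{j=1}^n λ_j (λ_j + ν₀+ν₁+ν₂+ν₃ - 1 + 2(n-j)ν)`
(written with 0-based index `j`, so `n - j` becomes `n - 1 - j`). -/
noncomputable def E_W (n : ℕ) (ν ν0 ν1 ν2 ν3 : ℝ) (lam : Fin n → ℤ) : ℝ :=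
  ∑ j : Fin n,
    (lam j : ℝ) * ((lam j : ℝ) + ν0 + ν1 + ν2 + ν3 - 1
      + 2 * ((n : ℝ) - 1 - (j : ℕ)) * ν)

namespace EWAux
open Finset

/-- Abel summation (summation by parts). -/
lemma myAbel {R : Type*} [CommRing R] (u d : ℕ → R) (n : ℕ) :
    ∑ j ∈ range n, d j * u j
      = (∑ i ∈ range n, (u i - u (i+1)) * (∑ j ∈ range (i+1), d j))
        + u n * ∑ j ∈ range n, d j := by
  induction n with
  | zero => simp
  | succ n ih =>
    rw [sum_range_succ, ih, sum_range_succ (fun i => (u i - u (i+1)) * (∑ j ∈ range (i+1), d j)),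
      sum_range_succ d n]
    ring

lemma Z_eq (a b : ℕ → ℤ) (n : ℕ) (ha0 : ∀ j, 0 ≤ a j) (hb0 : ∀ j, 0 ≤ b j) :
    ∑ j ∈ range n, (a j - b j) * (a j + b j - 1)
      = ∑ j ∈ range n, (a j - b j) * max (a j + b j - 1) 0 := by
  refine sum_congr rfl fun j _ => ?_
  rcases eq_or_ne (a j) (b j) with h | h
  · simp [h]
  · have h1 : max (a j + b j - 1) 0 = a j + b j - 1 := by
      have := ha0 j; have := hb0 j; omega
    rw [h1]

lemma uu_antitone (a b : ℕ → ℤ) (haA : ∀ j, a (j+1) ≤ a j) (hbA : ∀ j, b (j+1) ≤ b j) (i : ℕ) :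
    max (a (i+1) + b (i+1) - 1) 0 ≤ max (a i + b i - 1) 0 := by
  have := haA i; have := hbA i; omega

lemma Z_nonneg (a b : ℕ → ℤ) (n : ℕ) (ha0 : ∀ j, 0 ≤ a j) (hb0 : ∀ j, 0 ≤ b j)
    (haA : ∀ j, a (j+1) ≤ a j) (hbA : ∀ j, b (j+1) ≤ b j)
    (hD : ∀ m, 0 ≤ ∑ j ∈ range m, (a j - b j)) :
    0 ≤ ∑ j ∈ range n, (a j - b j) * (a j + b j - 1) := by
  rw [Z_eq a b n ha0 hb0,
    myAbel (fun j => max (a j + b j - 1) 0) (fun j => a j - b j) n]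
  have h1 : 0 ≤ ∑ i ∈ range n,
      (max (a i + b i - 1) 0 - max (a (i+1) + b (i+1) - 1) 0) * (∑ j ∈ range (i+1), (a j - b j)) := by
    refine sum_nonneg fun i _ => mul_nonneg ?_ (hD (i+1))
    have := uu_antitone a b haA hbA i; omega
  have h2 : 0 ≤ max (a n + b n - 1) 0 * ∑ j ∈ range n, (a j - b j) :=
    mul_nonneg (le_max_right _ _) (hD n)
  linarith

lemma Z_pos (a b : ℕ → ℤ) (n : ℕ) (ha0 : ∀ j, 0 ≤ a j) (hb0 : ∀ j, 0 ≤ b j)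
    (haA : ∀ j, a (j+1) ≤ a j) (hbA : ∀ j, b (j+1) ≤ b j)
    (hD : ∀ m, 0 ≤ ∑ j ∈ range m, (a j - b j))
    (hDn : ∑ j ∈ range n, (a j - b j) = 0)
    (hne : ∃ j, j < n ∧ a j ≠ b j) :
    1 ≤ ∑ j ∈ range n, (a j - b j) * (a j + b j - 1) := by
  classical
  have haM : Antitone a := antitone_nat_of_succ_le haA
  have hbM : Antitone b := antitone_nat_of_succ_le hbA
  obtain ⟨jw, hjwn, hjw⟩ := hne
  have hex : ∃ j, a j ≠ b j := ⟨jw, hjw⟩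
  set j0 := Nat.find hex with hj0def
  have hj0 : a j0 ≠ b j0 := Nat.find_spec hex
  have hj0min : ∀ i, i < j0 → a i = b i := by
    intro i hi
    by_contra h
    have h2 : j0 ≤ i := Nat.find_le h
    omega
  have hj0n : j0 < n := lt_of_le_of_lt (Nat.find_le hjw) hjwn
  have hDj0 : ∑ j ∈ range (j0+1), (a j - b j) = a j0 - b j0 := by
    rw [sum_range_succ]
    have h3 : ∑ j ∈ range j0, (a j - b j) = 0 :=
      sum_eq_zero fun i hi => by rw [hj0min i (mem_range.mp hi)]; ring
    rw [h3]; ring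
  have hdj0 : 1 ≤ a j0 - b j0 := by
    have h1 := hD (j0 + 1)
    rw [hDj0] at h1
    omega
  have hex2 : ∃ m, j0 < m ∧ ∑ j ∈ range m, (a j - b j) = 0 := ⟨n, hj0n, hDn⟩
  set k0 := Nat.find hex2 with hk0def
  obtain ⟨hk0a, hk0b⟩ : j0 < k0 ∧ ∑ j ∈ range k0, (a j - b j) = 0 := Nat.find_spec hex2
  have hk0min : ∀ m, m < k0 → j0 < m → ∑ j ∈ range m, (a j - b j) ≠ 0 := by
    intro m hm hm2 h
    have h2 : k0 ≤ m := Nat.find_le ⟨hm2, h⟩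
    omega
  have hk0n : k0 ≤ n := Nat.find_le ⟨hj0n, hDn⟩
  have hk0big : j0 + 2 ≤ k0 := by
    by_contra h
    have hk : k0 = j0 + 1 := by omega
    rw [hk, hDj0] at hk0b
    omega
  have hKk0 : (k0 - 1) + 1 = k0 := by omega
  have hj0K : j0 < k0 - 1 := by omega
  have hdK : a (k0-1) - b (k0-1) ≤ -1 := by
    have h0 : 1 ≤ ∑ j ∈ range (k0-1), (a j - b j) := by
      have h1 := hk0min (k0-1) (by omega) hj0K
      have h2 := hD (k0-1)
      omega
    have h1 : ∑ j ∈ range ((k0-1)+1), (a j - b j)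
        = ∑ j ∈ range (k0-1), (a j - b j) + (a (k0-1) - b (k0-1)) := sum_range_succ _ _
    rw [hKk0, hk0b] at h1
    omega
  have hDpos : ∀ m, j0 < m → m ≤ k0 - 1 → 1 ≤ ∑ j ∈ range m, (a j - b j) := by
    intro m h1 h2
    have h3 := hk0min m (by omega) h1
    have h4 := hD m
    omega
  set u : ℕ → ℤ := fun j => max (a j + b j - 1) 0 with hu
  have hterm : ∀ i, 0 ≤ u i - u (i+1) := fun i => by
    have := uu_antitone a b haA hbA i
    simp only [hu]; omega
  rw [Z_eq a b n ha0 hb0, myAbel u (fun j => a j - b j) n]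
  have step1 : ∑ i ∈ Ico j0 (k0-1), (u i - u (i+1))
      ≤ ∑ i ∈ Ico j0 (k0-1), (u i - u (i+1)) * (∑ j ∈ range (i+1), (a j - b j)) := by
    refine sum_le_sum fun i hi => ?_
    rw [mem_Ico] at hi
    exact le_mul_of_one_le_right (hterm i) (hDpos (i+1) (by omega) (by omega))
  have step2 : ∑ i ∈ Ico j0 (k0-1), (u i - u (i+1)) * (∑ j ∈ range (i+1), (a j - b j))
      ≤ ∑ i ∈ range n, (u i - u (i+1)) * (∑ j ∈ range (i+1), (a j - b j)) := by
    refine sum_le_sum_of_subset_of_nonneg ?_ fun i _ _ => mul_nonneg (hterm i) (hD (i+1))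
    intro i hi
    rw [mem_Ico] at hi; rw [mem_range]; omega
  have step0 : ∑ i ∈ Ico j0 (k0-1), (u i - u (i+1)) = u j0 - u (k0-1) := by
    rw [sum_Ico_eq_sub _ (le_of_lt hj0K), sum_range_sub' u (k0-1), sum_range_sub' u j0]
    ring
  have hgap : 2 ≤ u j0 - u (k0-1) := by
    have h1 : a (k0-1) ≤ a j0 := haM (le_of_lt hj0K)
    have h2 : b (k0-1) ≤ b j0 := hbM (le_of_lt hj0K)
    have h3 := ha0 (k0-1)
    have h4 := hb0 (k0-1)
    simp only [hu]
    omega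
  have hlast : u n * ∑ j ∈ range n, (a j - b j) = 0 := by rw [hDn]; ring
  rw [step0] at step1
  linarith

/-- Extension of a `Fin n → ℤ` function to `ℕ → ℤ` by zero. -/
noncomputable def extZ (n : ℕ) (f : Fin n → ℤ) : ℕ → ℤ :=
  fun j => if h : j < n then f ⟨j, h⟩ else 0

lemma extZ_lt (n : ℕ) (f : Fin n → ℤ) (j : ℕ) (h : j < n) : extZ n f j = f ⟨j, h⟩ := dif_pos h

lemma extZ_ge (n : ℕ) (f : Fin n → ℤ) (j : ℕ) (h : n ≤ j) : extZ n f j = 0 := dif_neg (by omega)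

lemma extZ_fin (n : ℕ) (f : Fin n → ℤ) (j : Fin n) : extZ n f (j : ℕ) = f j := by
  rw [extZ_lt n f j j.isLt]

lemma extZ_nonneg (n : ℕ) (f : Fin n → ℤ) (hf : ∀ j, 0 ≤ f j) (j : ℕ) : 0 ≤ extZ n f j := by
  by_cases h : j < n
  · rw [extZ_lt n f j h]; exact hf _
  · rw [extZ_ge n f j (by omega)]

lemma extZ_step (n : ℕ) (f : Fin n → ℤ) (hmono : ∀ i j : Fin n, i ≤ j → f j ≤ f i)
    (hf : ∀ j, 0 ≤ f j) (j : ℕ) : extZ n f (j+1) ≤ extZ n f j := by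
  by_cases h : j + 1 < n
  · rw [extZ_lt n f (j+1) h, extZ_lt n f j (by omega)]
    exact hmono ⟨j, by omega⟩ ⟨j+1, h⟩ (by simp [Fin.le_def])
  · rw [extZ_ge n f (j+1) (by omega)]
    exact extZ_nonneg n f hf j

lemma extZ_partSum (n : ℕ) (f : Fin n → ℤ) (m : ℕ) (hm : m ≤ n) :
    ∑ j ∈ range m, extZ n f j = partSum n f m := by
  have h1 : partSum n f m = ∑ j : Fin n, (fun k : ℕ => if k < m then extZ n f k else 0) (j : ℕ) := by
    rw [partSum, Finset.sum_filter]
    refine sum_congr rfl fun j _ => ?_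
    by_cases h : (j : ℕ) < m
    · simp only [h, if_true, extZ_fin]
    · simp only [h, if_false]
  rw [h1, Fin.sum_univ_eq_sum_range (fun k : ℕ => if k < m then extZ n f k else 0) n]
  rw [← Finset.sum_filter]
  have h2 : Finset.filter (fun k => k < m) (range n) = range m := by
    ext k; simp only [mem_filter, mem_range]; omega
  rw [h2]

lemma E_W_eq (n : ℕ) (ν ν0 ν1 ν2 ν3 : ℝ) (f : Fin n → ℤ) :
    E_W n ν ν0 ν1 ν2 ν3 f
      = ∑ k ∈ range n, (extZ n f k : ℝ) * ((extZ n f k : ℝ) + ν0 + ν1 + ν2 + ν3 - 1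
          + 2 * ((n : ℝ) - 1 - (k : ℕ)) * ν) := by
  rw [E_W, ← Fin.sum_univ_eq_sum_range (fun k : ℕ => (extZ n f k : ℝ) *
    ((extZ n f k : ℝ) + ν0 + ν1 + ν2 + ν3 - 1 + 2 * ((n : ℝ) - 1 - (k : ℕ)) * ν)) n]
  refine sum_congr rfl fun j _ => ?_
  rw [extZ_fin]

/-- The main abstract estimate. -/
lemma main_aux (n : ℕ) (ν ν0 ν1 ν2 ν3 : ℝ) (hν : 0 ≤ ν) (hC : 0 < ν0 + ν1 + ν2 + ν3)
    (a b : ℕ → ℤ)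
    (ha0 : ∀ j, 0 ≤ a j) (hb0 : ∀ j, 0 ≤ b j)
    (haA : ∀ j, a (j+1) ≤ a j) (hbA : ∀ j, b (j+1) ≤ b j)
    (hD : ∀ m, 0 ≤ ∑ j ∈ range m, (a j - b j))
    (hne : ∃ j, j < n ∧ a j ≠ b j) :
    ∑ k ∈ range n, (b k : ℝ) * ((b k : ℝ) + ν0 + ν1 + ν2 + ν3 - 1
        + 2 * ((n : ℝ) - 1 - (k : ℕ)) * ν)
      < ∑ k ∈ range n, (a k : ℝ) * ((a k : ℝ) + ν0 + ν1 + ν2 + ν3 - 1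
        + 2 * ((n : ℝ) - 1 - (k : ℕ)) * ν) := by
  have hn : 0 < n := by
    obtain ⟨j, hj, _⟩ := hne
    omega
  have hZ0 : 0 ≤ ∑ j ∈ range n, (a j - b j) * (a j + b j - 1) :=
    Z_nonneg a b n ha0 hb0 haA hbA hD
  rw [← sub_pos, ← sum_sub_distrib]
  have hterm : ∀ k ∈ range n,
      (a k : ℝ) * ((a k : ℝ) + ν0 + ν1 + ν2 + ν3 - 1 + 2 * ((n : ℝ) - 1 - (k : ℕ)) * ν)
        - (b k : ℝ) * ((b k : ℝ) + ν0 + ν1 + ν2 + ν3 - 1 + 2 * ((n : ℝ) - 1 - (k : ℕ)) * ν)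
      = (((a k - b k) * (a k + b k - 1) : ℤ) : ℝ)
        + (ν0 + ν1 + ν2 + ν3) * (((a k - b k : ℤ)) : ℝ)
        + ((a k - b k : ℤ) : ℝ) * (2 * ((n : ℝ) - 1 - (k : ℕ)) * ν) := by
    intro k _
    push_cast
    ring
  rw [sum_congr rfl hterm, sum_add_distrib, sum_add_distrib, ← Int.cast_sum, ← mul_sum,
    ← Int.cast_sum]
  have hDR : ∀ m, (0:ℝ) ≤ ∑ j ∈ range m, ((a j - b j : ℤ) : ℝ) := by
    intro m
    rw [← Int.cast_sum]
    exact_mod_cast hD m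
  have hν3 : 0 ≤ ∑ k ∈ range n, ((a k - b k : ℤ) : ℝ) * (2 * ((n : ℝ) - 1 - (k : ℕ)) * ν) := by
    rw [myAbel (fun k => 2 * ((n : ℝ) - 1 - (k : ℕ)) * ν) (fun k => ((a k - b k : ℤ) : ℝ)) n]
    have e1 : ∀ i ∈ range n,
        (2 * ((n : ℝ) - 1 - (i : ℕ)) * ν - 2 * ((n : ℝ) - 1 - ((i+1 : ℕ) : ℝ)) * ν)
          * (∑ j ∈ range (i+1), ((a j - b j : ℤ) : ℝ))
        = 2 * ν * (∑ j ∈ range (i+1), ((a j - b j : ℤ) : ℝ)) := by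
      intro i _
      push_cast
      ring
    rw [sum_congr rfl e1]
    have e2 : (2 * ((n : ℝ) - 1 - ((n : ℕ) : ℝ)) * ν) * (∑ j ∈ range n, ((a j - b j : ℤ) : ℝ))
        = -(2 * ν * (∑ j ∈ range n, ((a j - b j : ℤ) : ℝ))) := by
      push_cast
      ring
    rw [e2]
    have hsingle : 2 * ν * (∑ j ∈ range n, ((a j - b j : ℤ) : ℝ))
        ≤ ∑ i ∈ range n, 2 * ν * (∑ j ∈ range (i+1), ((a j - b j : ℤ) : ℝ)) := by
      have hmem : n - 1 ∈ range n := mem_range.mpr (by omega)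
      have h := single_le_sum (f := fun i => 2 * ν * (∑ j ∈ range (i+1), ((a j - b j : ℤ) : ℝ)))
        (fun i _ => mul_nonneg (mul_nonneg (by norm_num) hν) (hDR (i+1))) hmem
      have hn1 : n - 1 + 1 = n := by omega
      simp only [hn1] at h
      exact h
    linarith
  rcases lt_or_eq_of_le (hD n) with hpos | heq
  · have h1 : (1:ℤ) ≤ ∑ j ∈ range n, (a j - b j) := hpos
    have h1R : (1:ℝ) ≤ ((∑ j ∈ range n, (a j - b j) : ℤ) : ℝ) := by exact_mod_cast h1
    have h2 : (0:ℝ) ≤ ((∑ j ∈ range n, (a j - b j) * (a j + b j - 1) : ℤ) : ℝ) := by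
      exact_mod_cast hZ0
    nlinarith
  · have hDn : ∑ j ∈ range n, (a j - b j) = 0 := heq.symm
    have hZ1 : 1 ≤ ∑ j ∈ range n, (a j - b j) * (a j + b j - 1) :=
      Z_pos a b n ha0 hb0 haA hbA hD hDn hne
    have hZ1R : (1:ℝ) ≤ ((∑ j ∈ range n, (a j - b j) * (a j + b j - 1) : ℤ) : ℝ) := by
      exact_mod_cast hZ1
    rw [hDn, Int.cast_zero]
    linarith

end EWAux

open Finset EWAux in
/-- Strict monotonicity of the Wilson eigenvalues along the dominance order. -/
theorem E_W_strict_mono (n : ℕ) (ν ν0 ν1 ν2 ν3 : ℝ)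
    (hν : 0 ≤ ν) (h0 : 0 < ν0) (h1 : 0 < ν1) (h2 : 0 < ν2) (h3 : 0 < ν3)
    (mu lam : Fin n → ℤ) (hmu : InCone n mu) (hlam : InCone n lam)
    (hdom : Dominates n mu lam) (hne : mu ≠ lam) :
    E_W n ν ν0 ν1 ν2 ν3 mu < E_W n ν ν0 ν1 ν2 ν3 lam := by
  classical
  obtain ⟨jx, hjx⟩ := Function.ne_iff.mp hne
  have hDle : ∀ m, m ≤ n → 0 ≤ ∑ j ∈ range m, (extZ n lam j - extZ n mu j) := by
    intro m hm
    rcases Nat.eq_zero_or_pos m with h0m | h0m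
    · simp [h0m]
    · have hd := hdom m h0m hm
      rw [sum_sub_distrib, extZ_partSum n lam m hm, extZ_partSum n mu m hm]
      omega
  have hD : ∀ m, 0 ≤ ∑ j ∈ range m, (extZ n lam j - extZ n mu j) := by
    intro m
    rcases le_or_gt m n with hm | hm
    · exact hDle m hm
    · have hsplit : ∑ j ∈ range n, (extZ n lam j - extZ n mu j)
          + ∑ j ∈ Ico n m, (extZ n lam j - extZ n mu j)
          = ∑ j ∈ range m, (extZ n lam j - extZ n mu j) :=
        sum_range_add_sum_Ico (fun j => extZ n lam j - extZ n mu j) (le_of_lt hm)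
      have htail : ∑ j ∈ Ico n m, (extZ n lam j - extZ n mu j) = 0 := by
        refine sum_eq_zero fun j hj => ?_
        rw [extZ_ge n lam j (mem_Ico.mp hj).1, extZ_ge n mu j (mem_Ico.mp hj).1]
        ring
      have := hDle n le_rfl
      rw [htail] at hsplit
      omega
  have hnenat : ∃ j, j < n ∧ extZ n lam j ≠ extZ n mu j := by
    refine ⟨(jx : ℕ), jx.isLt, ?_⟩
    rw [extZ_fin, extZ_fin]
    exact fun h => hjx h.symm
  rw [E_W_eq n ν ν0 ν1 ν2 ν3 lam, E_W_eq n ν ν0 ν1 ν2 ν3 mu]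
  exact main_aux n ν ν0 ν1 ν2 ν3 hν (by linarith) (extZ n lam) (extZ n mu)
    (extZ_nonneg n lam hlam.2) (extZ_nonneg n mu hmu.2)
    (extZ_step n lam hlam.1 hlam.2) (extZ_step n mu hmu.1 hmu.2)
    hD hnenat
end

section
/- Define E_r(x₁,…,xₙ; y_r,…,yₙ) = ∑_{J ⊆ {1,…,n}, |J| ≤ r} (-1)^{r-|J|} (∏_{j∈J} x_j) · ∑_{r ≤ l₁ ≤ ⋯ ≤ l_{r-|J|} ≤ n} y_{l₁}⋯y_{l_{r-|J|}} (the inner sum equal to 1 when |J| = r). Then for real variables, lim_{α→0} α^{-2r} E_r(e^{αx₁}+e^{-αx₁},…,e^{αxₙ}+e^{-αxₙ}; e^{αy_r}+e^{-αy_r},…,e^{αyₙ}+e^{-αyₙ}) = E_r(x₁²,…,xₙ²; y_r²,…,yₙ²). -/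
open scoped Classical

/-- Complete homogeneous-type inner sum:
`∑_{r ≤ l₁ ≤ ⋯ ≤ l_p ≤ n} y_{l₁} ⋯ y_{l_p}` realized as a sum over monotone
tuples `f : Fin p → Fin n` whose values (1-based) are ≥ r.  It equals 1 when `p = 0`. -/
noncomputable def innerSum (n r p : ℕ) (y : Fin n → ℝ) : ℝ :=
  ∑ f ∈ Finset.univ.filter
      (fun f : Fin p → Fin n => Monotone f ∧ ∀ i, r ≤ (f i : ℕ) + 1),
    ∏ i, y (f i)

/-- The symmetric function
`E_r(x₁,…,xₙ; y_r,…,yₙ) = ∑_{J ⊆ {1,…,n}, |J| ≤ r} (-1)^{r-|J|} (∏_{j∈J} x_j)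
  ∑_{r ≤ l₁ ≤ ⋯ ≤ l_{r-|J|} ≤ n} y_{l₁}⋯y_{l_{r-|J|}}`. -/
noncomputable def Er (n r : ℕ) (x y : Fin n → ℝ) : ℝ :=
  ∑ J ∈ Finset.univ.filter (fun J : Finset (Fin n) => J.card ≤ r),
    (-1 : ℝ) ^ (r - J.card) * (∏ j ∈ J, x j) * innerSum n r (r - J.card) y

/-!
With `e_k` the elementary and `h_m` the complete homogeneous symmetric polynomials (the latter in
the `n - r + 1` variables `y_r, …, y_n`), `E_r = ∑_{k + m = r} (-1)^m e_k(x) h_m(y)`. Shifting every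
variable by `c`, `d/dc e_{k+1} = (n - k) e_k` and `d/dc h_{m+1} = (n - r + 1 + m) h_m`; for
`k + m + 1 = r` the two coefficients agree, so the derivative telescopes to `0` and `E_r` is
invariant under a common shift. Since `e^{αt} + e^{-αt} = 2 + α² (2 sinh(αt/2) / α)²`, this
invariance (for the shift by `2`) and homogeneity of degree `r` give
`α^{-2r} E_r(e^{αx} + e^{-αx}; …) = E_r((2 sinh(αx/2) / α)²; …)`, which tends to `E_r(x²; y²)`.
-/

open Finset MvPolynomial

section Esymm

variable {ι : Type*} [Fintype ι]

theorem Finset.sum_powersetCard_succ_sum_erase [DecidableEq ι] {M : Type*} [AddCommMonoid M]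
    (g : Finset ι → M) (k : ℕ) :
    ∑ J ∈ powersetCard (k + 1) (univ : Finset ι), ∑ j ∈ J, g (J.erase j)
      = (Fintype.card ι - k) • ∑ J ∈ powersetCard k (univ : Finset ι), g J := by
  rw [sum_sigma', smul_sum]
  calc _ = ∑ p ∈ (powersetCard k (univ : Finset ι)).sigma fun J => Jᶜ, g p.1 := by
        refine sum_nbij' (fun p => ⟨p.1.erase p.2, p.2⟩) (fun p => ⟨insert p.2 p.1, p.2⟩)
          ?_ ?_ ?_ ?_ (fun _ _ => rfl) <;>
        rintro ⟨J, j⟩ h <;>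
        simp only [mem_sigma, mem_powersetCard, subset_univ, true_and, mem_compl] at h ⊢
        · simp [card_erase_of_mem h.2, h.1]
        · simp [card_insert_of_notMem h.2, h.1]
        · simp [insert_erase h.2]
        · simp [erase_insert h.2]
    _ = _ := by
        rw [sum_sigma]
        refine sum_congr rfl fun J hJ => ?_
        simp [card_compl, (mem_powersetCard.1 hJ).2]

theorem MvPolynomial.eval_esymm (x : ι → ℝ) (k : ℕ) :
    eval x (esymm ι ℝ k) = ∑ J ∈ powersetCard k univ, ∏ j ∈ J, x j := by
  simp [esymm, map_prod]

theorem MvPolynomial.hasDerivAt_eval_esymm_const_add [DecidableEq ι] (x : ι → ℝ) (k : ℕ)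
    (c : ℝ) :
    HasDerivAt (fun c => eval (fun i => c + x i) (esymm ι ℝ (k + 1)))
      (((Fintype.card ι - k : ℕ) : ℝ) * eval (fun i => c + x i) (esymm ι ℝ k)) c := by
  simp only [eval_esymm]
  refine (HasDerivAt.fun_sum fun J _ => HasDerivAt.fun_finsetProd (u := J)
    fun j _ => (hasDerivAt_id c).add_const (x j)).congr_deriv ?_
  simp only [smul_eq_mul, mul_one, id]
  rw [sum_powersetCard_succ_sum_erase (fun J => ∏ j ∈ J, (c + x j)), nsmul_eq_mul]

end Esymm

theorem Multiset.hasDerivAt_prod_map_const_add {α : Type*} [DecidableEq α] (s : Multiset α)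
    (y : α → ℝ) (c : ℝ) :
    HasDerivAt (fun c => (s.map fun a => c + y a).prod)
      (s.map fun a => ((s.erase a).map fun b => c + y b).prod).sum c := by
  have h := HasFDerivAt.multiset_prod (u := s) (g := fun a c => c + y a) (x := c)
    fun a _ => ((hasDerivAt_id c).add_const (y a)).hasFDerivAt
  have happly (t : Multiset α) (f : α → ℝ) :
      (t.map fun a => f a • ContinuousLinearMap.toSpanSingleton ℝ (1 : ℝ)).sum 1
        = (t.map f).sum := by
    induction t using Multiset.induction <;> simp [*]
  exact h.hasDerivAt.congr_deriv (happly s _)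

section Hsymm

variable {α : Type*} [Fintype α]

-- `t` arises as `s.erase a` only from `s = a ::ₛ t`, where `a` occurs `count a t + 1` times;
-- summing over `a` gives `m + card α`.
theorem Sym.sum_sum_map_erase_eq [DecidableEq α] {M : Type*} [AddCommMonoid M]
    (G : Multiset α → M) (m : ℕ) :
    ∑ s : Sym α (m + 1), ((s : Multiset α).map fun a => G ((s : Multiset α).erase a)).sum
      = (Fintype.card α + m) • ∑ t : Sym α m, G t := by
  have hcount (s : Multiset α) (F : α → M) : (s.map F).sum = ∑ a, s.count a • F a := by
    rw [sum_multiset_map_count]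
    exact sum_subset (subset_univ _) fun a _ ha => by
      simp [Multiset.count_eq_zero.2 (by simpa using ha)]
  have hfix (a : α) :
      ∑ s : Sym α (m + 1), (s : Multiset α).count a • G ((s : Multiset α).erase a)
        = ∑ t : Sym α m, ((t : Multiset α).count a + 1) • G t := by
    let F (s : Sym α (m + 1)) := (s : Multiset α).count a • G ((s : Multiset α).erase a)
    symm
    calc ∑ t : Sym α m, ((t : Multiset α).count a + 1) • G t
        = ∑ t : Sym α m, F (a ::ₛ t) := by simp [F, Sym.coe_cons]
      _ = ∑ s ∈ univ.image (a ::ₛ ·), F s :=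
          (sum_image fun t _ t' _ h => (Sym.cons_inj_right a t t').1 h).symm
      _ = ∑ s, F s := by
          refine sum_subset (subset_univ _) fun s _ hs => ?_
          have : a ∉ (s : Multiset α) := fun h =>
            hs (by simpa using ⟨s.erase a h, Sym.cons_erase h⟩)
          simp only [F, Multiset.count_eq_zero.2 this, zero_smul]
  simp only [hcount]
  rw [sum_comm]
  simp only [hfix]
  rw [sum_comm, smul_sum]
  refine sum_congr rfl fun t _ => ?_
  rw [← sum_smul, sum_add_distrib, Multiset.sum_count_eq_card fun a _ => mem_univ a]
  simp [add_comm]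

theorem MvPolynomial.eval_hsymm [DecidableEq α] (y : α → ℝ) (m : ℕ) :
    eval y (hsymm α ℝ m) = ∑ s : Sym α m, ((s : Multiset α).map y).prod := by
  simp [hsymm, map_multiset_prod, Multiset.map_map]

theorem MvPolynomial.hasDerivAt_eval_hsymm_const_add [DecidableEq α] (y : α → ℝ) (m : ℕ)
    (c : ℝ) :
    HasDerivAt (fun c => eval (fun a => c + y a) (hsymm α ℝ (m + 1)))
      (((Fintype.card α + m : ℕ) : ℝ) * eval (fun a => c + y a) (hsymm α ℝ m)) c := by
  simp only [eval_hsymm]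
  refine (HasDerivAt.fun_sum (u := univ)
    (A := fun (s : Sym α (m + 1)) c => ((s : Multiset α).map fun a => c + y a).prod)
    fun s _ => (s : Multiset α).hasDerivAt_prod_map_const_add y c).congr_deriv ?_
  rw [Sym.sum_sum_map_erase_eq (fun t => (t.map fun b => c + y b).prod), nsmul_eq_mul]

-- A monotone tuple is the sorted list of its multiset of values.
theorem sum_monotone_prod_eq_eval_hsymm [LinearOrder α] (y : α → ℝ) (p : ℕ) :
    ∑ f ∈ univ.filter (fun f : Fin p → α => Monotone f), ∏ i, y (f i)
      = eval y (hsymm α ℝ p) := by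
  rw [eval_hsymm]
  refine sum_bij (fun f _ => ⟨(List.ofFn f : Multiset α), by simp⟩) (fun _ _ => mem_univ _)
    (fun f hf g hg hfg => ?_) (fun s _ => ?_) (fun f _ => by simp [List.prod_ofFn])
  · simp only [mem_filter, mem_univ, true_and] at hf hg
    have hperm : (List.ofFn f).Perm (List.ofFn g) :=
      Multiset.coe_eq_coe.1 (congrArg Subtype.val hfg)
    exact List.ofFn_injective (hperm.eq_of_sortedLE hf.sortedLE_ofFn hg.sortedLE_ofFn)
  · set l := (s : Multiset α).sort
    have hlen : l.length = p := by simp [l, Multiset.length_sort]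
    have hofFn : List.ofFn (fun i : Fin p => l[i]) = l :=
      List.ext_getElem (by simp [hlen]) fun i _ _ => by simp
    refine ⟨fun i => l[i], ?_, ?_⟩
    · simp only [mem_filter, mem_univ, true_and]
      rw [← List.sortedLE_ofFn_iff, hofFn]
      exact (Multiset.pairwise_sort _ _).sortedLE
    · ext1
      change ((List.ofFn fun i : Fin p => l[i] : List α) : Multiset α) = s
      rw [hofFn, Multiset.sort_eq]

theorem sum_monotone_subtype [LinearOrder α] (P : α → Prop) [DecidablePred P] (p : ℕ)
    (F : (Fin p → α) → ℝ) :
    ∑ f ∈ univ.filter (fun f : Fin p → α => Monotone f ∧ ∀ i, P (f i)), F f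
      = ∑ g ∈ univ.filter (fun g : Fin p → Subtype P => Monotone g), F (Subtype.val ∘ g) := by
  symm
  refine sum_bij (fun g _ => Subtype.val ∘ g) (fun g hg => ?_) (fun g _ g' _ h => ?_)
    (fun f hf => ?_) (fun _ _ => rfl)
  · simp only [mem_filter, mem_univ, true_and] at hg ⊢
    exact ⟨hg, fun i => (g i).2⟩
  · funext i
    exact Subtype.ext (congrFun h i)
  · simp only [mem_filter, mem_univ, true_and] at hf
    exact ⟨fun i => ⟨f i, hf.2 i⟩, mem_filter.2 ⟨mem_univ _, fun a b hab => hf.1 hab⟩, rfl⟩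

end Hsymm

theorem hasDerivAt_sum_antidiagonal_alternating {A B : ℕ → ℝ → ℝ} {a b : ℕ → ℝ} {r : ℕ}
    {c : ℝ} (hA₀ : HasDerivAt (A 0) 0 c) (hA : ∀ k, HasDerivAt (A (k + 1)) (a k * A k c) c)
    (hB₀ : HasDerivAt (B 0) 0 c) (hB : ∀ m, HasDerivAt (B (m + 1)) (b m * B m c) c)
    (hab : ∀ k m, k + m + 1 = r → a k = b m) :
    HasDerivAt (fun c => ∑ p ∈ antidiagonal r, (-1) ^ p.2 * (A p.1 c * B p.2 c)) 0 c := by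
  let A' : ℕ → ℝ := fun k => k.casesOn 0 fun k => a k * A k c
  let B' : ℕ → ℝ := fun m => m.casesOn 0 fun m => b m * B m c
  have hA' (k : ℕ) : HasDerivAt (A k) (A' k) c := by cases k <;> simp [A', hA₀, hA]
  have hB' (m : ℕ) : HasDerivAt (B m) (B' m) c := by cases m <;> simp [B', hB₀, hB]
  refine (HasDerivAt.fun_sum fun p _ => ((hA' p.1).mul (hB' p.2)).const_mul _).congr_deriv ?_
  cases r with
  | zero => simp [A', B']
  | succ s =>
    simp only [mul_add, sum_add_distrib]
    rw [Nat.sum_antidiagonal_succ, Nat.sum_antidiagonal_succ']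
    simp only [A', B', Nat.rec_zero, zero_mul, mul_zero, zero_add, ← sum_add_distrib]
    refine sum_eq_zero fun p hp => ?_
    rw [hab p.1 p.2 (by rw [mem_antidiagonal.1 hp])]
    ring

theorem Fin.card_subtype_le_val_add_one (n r : ℕ) :
    Fintype.card {l : Fin n // r ≤ (l : ℕ) + 1} = n - (r - 1) := by
  have hsplit := card_filter_add_card_filter_not (s := univ) fun l : Fin n => (l : ℕ) < r - 1
  rw [Fin.card_filter_val_lt, card_univ, Fintype.card_fin] at hsplit
  rw [Fintype.card_subtype]
  convert (show #{l : Fin n | ¬ (l : ℕ) < r - 1} = n - (r - 1) by omega) using 3 with l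
  omega

theorem innerSum_eq_eval_hsymm (n r p : ℕ) (y : Fin n → ℝ) :
    innerSum n r p y = eval (fun l : {l : Fin n // r ≤ (l : ℕ) + 1} => y l) (hsymm _ ℝ p) :=
  calc innerSum n r p y
      = ∑ f ∈ univ.filter (fun f : Fin p → Fin n => Monotone f ∧ ∀ i, r ≤ (f i : ℕ) + 1),
          ∏ i, y (f i) := rfl
    _ = _ := sum_monotone_subtype (fun l : Fin n => r ≤ (l : ℕ) + 1) p
          (fun f : Fin p → Fin n => ∏ i, y (f i))
    _ = _ := sum_monotone_prod_eq_eval_hsymm (fun l : {l : Fin n // r ≤ (l : ℕ) + 1} => y l) p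

theorem Er_eq_sum_antidiagonal (n r : ℕ) (x y : Fin n → ℝ) :
    Er n r x y = ∑ p ∈ antidiagonal r, (-1) ^ p.2 * (eval x (esymm (Fin n) ℝ p.1) *
      eval (fun l : {l : Fin n // r ≤ (l : ℕ) + 1} => y l) (hsymm _ ℝ p.2)) := by
  rw [Nat.sum_antidiagonal_eq_sum_range_succ_mk, Er, ← sum_fiberwise_of_maps_to (g := card)
    (t := range (r + 1)) fun J hJ => by simpa [Nat.lt_succ_iff] using hJ]
  refine sum_congr rfl fun k hk => ?_
  have hfiber : {J ∈ univ.filter (fun J : Finset (Fin n) => J.card ≤ r) | J.card = k}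
      = powersetCard k univ := by
    ext J
    simp only [mem_filter, mem_univ, true_and, mem_powersetCard, subset_univ]
    exact ⟨And.right, fun h => ⟨h ▸ Nat.lt_succ_iff.1 (mem_range.1 hk), h⟩⟩
  rw [hfiber, eval_esymm, sum_mul, mul_sum]
  refine sum_congr rfl fun J hJ => ?_
  rw [(mem_powersetCard.1 hJ).2, innerSum_eq_eval_hsymm]
  ring

theorem Er_const_add (n r : ℕ) (hr : r ≤ n + 1) (c : ℝ) (x y : Fin n → ℝ) :
    Er n r (fun j => c + x j) (fun j => c + y j) = Er n r x y := by
  have hderiv (d : ℝ) :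
      HasDerivAt (fun c => Er n r (fun j => c + x j) (fun j => c + y j)) 0 d := by
    simp only [Er_eq_sum_antidiagonal]
    refine hasDerivAt_sum_antidiagonal_alternating
      (A := fun k c => eval (fun j => c + x j) (esymm (Fin n) ℝ k))
      (B := fun m c => eval (fun l : {l : Fin n // r ≤ (l : ℕ) + 1} => c + y l) (hsymm _ ℝ m))
      (by simpa [esymm_zero] using hasDerivAt_const d (1 : ℝ))
      (fun k => hasDerivAt_eval_esymm_const_add x k d)
      (by simpa [hsymm_zero] using hasDerivAt_const d (1 : ℝ))
      (fun m => hasDerivAt_eval_hsymm_const_add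
        (fun l : {l : Fin n // r ≤ (l : ℕ) + 1} => y l) m d) fun k m hkm => ?_
    rw [Fintype.card_fin, Fin.card_subtype_le_val_add_one]
    congr 1
    omega
  simpa using is_const_of_deriv_eq_zero (fun d => (hderiv d).differentiableAt)
    (fun d => (hderiv d).deriv) c 0

theorem Er_const_mul (n r : ℕ) (s : ℝ) (x y : Fin n → ℝ) :
    Er n r (fun j => s * x j) (fun j => s * y j) = s ^ r * Er n r x y := by
  have hinner (p : ℕ) : innerSum n r p (fun j => s * y j) = s ^ p * innerSum n r p y := by
    simp only [innerSum, mul_sum, prod_mul_distrib, prod_const, card_univ, Fintype.card_fin]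
  simp only [Er, mul_sum, hinner, prod_mul_distrib, prod_const]
  refine sum_congr rfl fun J hJ => ?_
  rw [← Nat.add_sub_cancel' (mem_filter.1 hJ).2, pow_add, Nat.add_sub_cancel_left]
  ring

theorem continuous_Er (n r : ℕ) :
    Continuous fun p : (Fin n → ℝ) × (Fin n → ℝ) => Er n r p.1 p.2 := by
  unfold Er innerSum
  fun_prop

theorem Real.exp_mul_add_exp_neg_mul {α : ℝ} (hα : α ≠ 0) (t : ℝ) :
    Real.exp (α * t) + Real.exp (-(α * t))
      = 2 + α ^ 2 * (2 * Real.sinh (α * t / 2) / α) ^ 2 := by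
  have hcosh : Real.cosh (α * t) = 1 + 2 * Real.sinh (α * t / 2) ^ 2 := by
    rw [show α * t = 2 * (α * t / 2) by ring, Real.cosh_two_mul, Real.cosh_sq]
    ring_nf
  calc Real.exp (α * t) + Real.exp (-(α * t)) = 2 * Real.cosh (α * t) := by
        rw [Real.cosh_eq]; ring
    _ = _ := by rw [hcosh]; field_simp

theorem Real.tendsto_two_mul_sinh_mul_div (t : ℝ) :
    Filter.Tendsto (fun α => 2 * Real.sinh (α * t / 2) / α) (nhdsWithin 0 {0}ᶜ) (nhds t) := by
  have hderiv : HasDerivAt (fun α => 2 * Real.sinh (α * t / 2)) t 0 :=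
    ((((hasDerivAt_id (0 : ℝ)).mul_const t).div_const 2).sinh.const_mul 2).congr_deriv
      (by simp; ring)
  simpa [div_eq_inv_mul] using hderiv.tendsto_slope_zero

theorem Er_limit_general (n r : ℕ) (hrn : r ≤ n) (x y : Fin n → ℝ) :
    Filter.Tendsto (fun α : ℝ =>
        (α ^ (2 * r))⁻¹ *
          Er n r (fun j => Real.exp (α * x j) + Real.exp (-(α * x j)))
            (fun j => Real.exp (α * y j) + Real.exp (-(α * y j))))
      (nhdsWithin 0 {0}ᶜ)
      (nhds (Er n r (fun j => x j ^ 2) (fun j => y j ^ 2))) := by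
  let u (α t : ℝ) : ℝ := (2 * Real.sinh (α * t / 2) / α) ^ 2
  have hu (t : ℝ) : Filter.Tendsto (fun α => u α t) (nhdsWithin 0 {0}ᶜ) (nhds (t ^ 2)) :=
    (Real.tendsto_two_mul_sinh_mul_div t).pow 2
  have hlim := ((continuous_Er n r).tendsto _).comp
    ((tendsto_pi_nhds.2 fun j => hu (x j)).prodMk_nhds (tendsto_pi_nhds.2 fun j => hu (y j)))
  refine hlim.congr' ?_
  filter_upwards [self_mem_nhdsWithin] with α hα
  simp only [Function.comp_apply, Real.exp_mul_add_exp_neg_mul hα]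
  rw [Er_const_add n r (by omega) 2 (fun j => α ^ 2 * u α (x j)) (fun j => α ^ 2 * u α (y j)),
    Er_const_mul, ← pow_mul, inv_mul_cancel_left₀ (pow_ne_zero _ hα)]

/-- Lemma 5.2 of the paper:
`lim_{α→0} α^{-2r} E_r(e^{αx}+e^{-αx}; e^{αy}+e^{-αy}) = E_r(x²; y²)`. -/
theorem Er_limit (n r : ℕ) (hr1 : 1 ≤ r) (hrn : r ≤ n) (x y : Fin n → ℝ) :
    Filter.Tendsto (fun α : ℝ =>
        (α ^ (2 * r))⁻¹ *
          Er n r (fun j => Real.exp (α * x j) + Real.exp (-(α * x j)))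
            (fun j => Real.exp (α * y j) + Real.exp (-(α * y j))))
      (nhdsWithin 0 {0}ᶜ)
      (nhds (Er n r (fun j => x j ^ 2) (fun j => y j ^ 2))) :=
  Er_limit_general n r hrn x y
end
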